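/- arXiv:1304.7714 — 4 statements merged into one kernel-verified Lean document; each statement's English description precedes it below -/
import Mathlib

section
/- For an indecomposable countable limit ordinal α (i.e., α = ω^δ for some δ > 0) and any subset A ⊆ α, either A has order type α or its complement α \ A has order type α. -/
/-!
The order type of a union is at most the natural (Hessenberg) sum of the order types: on `A ∪ B`
the map `x ↦ type (A ∩ Iio x) ♯ type (B ∩ Iio x)` is strictly increasing. And `ω ^ δ` is closed
under the natural sum. In the successor step one writes ordinals in base `W = ω ^ e`: the bound
`a ♯ b ≤ W * (a / W ♯ b / W) + (a % W ♯ b % W)` reduces closure of `W * ω` to closure of `W`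
and of `ω`. Hence if both `A` and `α \ A` had order type below `α = ω ^ δ`, so would their
union `α`.
-/

open Ordinal Set

/-- The order type of a set in a linear order: the (unique, when it exists)
ordinal `o` such that the set is order-isomorphic to `Set.Iio o`. -/
noncomputable def otypeOf {X : Type*} [LinearOrder X] (s : Set X) : Ordinal :=
  sInf {o : Ordinal | Nonempty (s ≃o Set.Iio o)}

universe u v

namespace Ordinal

noncomputable def nadd (a b : Ordinal.{u}) : Ordinal.{u} :=
  sInf {o | (∀ a' < a, nadd a' b < o) ∧ ∀ b' < b, nadd a b' < o}
termination_by (a, b)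
decreasing_by
  · exact Prod.Lex.left _ _ ‹_›
  · exact Prod.Lex.right _ ‹_›

infixl:65 " ♯ " => nadd

theorem nadd_le_iff {a b c : Ordinal.{u}} :
    a ♯ b ≤ c ↔ (∀ a' < a, a' ♯ b < c) ∧ ∀ b' < b, a ♯ b' < c := by
  refine ⟨fun h => ?_, fun h => by rw [nadd]; exact csInf_le' h⟩
  obtain ⟨x, hx⟩ := bddAbove_of_small (s := (· ♯ b) '' Iio a)
  obtain ⟨y, hy⟩ := bddAbove_of_small (s := (a ♯ ·) '' Iio b)
  have hne : {o | (∀ a' < a, a' ♯ b < o) ∧ ∀ b' < b, a ♯ b' < o}.Nonempty :=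
    ⟨Order.succ (max x y),
      fun a' ha' => Order.lt_succ_iff.2 ((hx ⟨a', ha', rfl⟩).trans (le_max_left x y)),
      fun b' hb' => Order.lt_succ_iff.2 ((hy ⟨b', hb', rfl⟩).trans (le_max_right x y))⟩
  have hmem := csInf_mem hne
  rw [← nadd] at hmem
  exact ⟨fun a' ha' => (hmem.1 a' ha').trans_le h, fun b' hb' => (hmem.2 b' hb').trans_le h⟩

theorem nadd_lt_nadd_right {a b : Ordinal.{u}} (h : a < b) (c : Ordinal.{u}) : a ♯ c < b ♯ c :=
  (nadd_le_iff.1 le_rfl).1 a h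

theorem nadd_lt_nadd_left {a b : Ordinal.{u}} (h : a < b) (c : Ordinal.{u}) : c ♯ a < c ♯ b :=
  (nadd_le_iff.1 le_rfl).2 a h

theorem nadd_le_nadd_right {a b : Ordinal.{u}} (h : a ≤ b) (c : Ordinal.{u}) : a ♯ c ≤ b ♯ c :=
  StrictMono.monotone (fun _ _ h => nadd_lt_nadd_right h c) h

theorem nadd_le_nadd_left {a b : Ordinal.{u}} (h : a ≤ b) (c : Ordinal.{u}) : c ♯ a ≤ c ♯ b :=
  StrictMono.monotone (fun _ _ h => nadd_lt_nadd_left h c) h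

theorem natCast_nadd_natCast_le (m n : ℕ) : (m : Ordinal.{u}) ♯ n ≤ (m + n : ℕ) := by
  induction m using Nat.strong_induction_on generalizing n with
  | _ m IHm =>
  induction n using Nat.strong_induction_on with
  | _ n IHn =>
  refine nadd_le_iff.2 ⟨fun a' ha' => ?_, fun b' hb' => ?_⟩
  · obtain ⟨k, rfl⟩ := lt_omega0.1 (ha'.trans (natCast_lt_omega0 m))
    have hk : k < m := by exact_mod_cast ha'
    exact (IHm k hk n).trans_lt (by exact_mod_cast (by omega : k + n < m + n))
  · obtain ⟨k, rfl⟩ := lt_omega0.1 (hb'.trans (natCast_lt_omega0 n))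
    have hk : k < n := by exact_mod_cast hb'
    exact (IHn k hk).trans_lt (by exact_mod_cast (by omega : m + k < m + n))

theorem isPrincipal_nadd_omega0 : IsPrincipal nadd ω := by
  intro a b ha hb
  obtain ⟨m, rfl⟩ := lt_omega0.1 ha
  obtain ⟨n, rfl⟩ := lt_omega0.1 hb
  exact (natCast_nadd_natCast_le m n).trans_lt (natCast_lt_omega0 _)

theorem div_lt_div_or_mod_lt (W : Ordinal) {a b : Ordinal} (h : a < b) :
    a / W < b / W ∨ a / W = b / W ∧ a % W < b % W := by
  refine (div_le_left h.le W).lt_or_eq.imp_right fun hdiv => ⟨hdiv, ?_⟩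
  rwa [← div_add_mod a W, ← div_add_mod b W, hdiv, add_lt_add_iff_left] at h

theorem mul_add_lt_mul_add {W p q x y : Ordinal} (hx : x < W) (h : p < q ∨ p = q ∧ x < y) :
    W * p + x < W * q + y := by
  rcases h with h | ⟨rfl, h⟩
  · calc W * p + x < W * p + W := add_lt_add_right hx _
      _ = W * Order.succ p := (mul_succ W p).symm
      _ ≤ W * q := mul_le_mul_right (Order.succ_le_of_lt h) W
      _ ≤ W * q + y := le_self_add
  · exact add_lt_add_right h _

theorem nadd_le_mul_div_nadd_add_mod_nadd {W : Ordinal.{u}} (hW : IsPrincipal nadd W)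
    (hW₀ : W ≠ 0) (a b : Ordinal.{u}) : a ♯ b ≤ W * (a / W ♯ b / W) + (a % W ♯ b % W) := by
  induction a using WellFoundedLT.induction generalizing b with
  | _ a IHa =>
  induction b using WellFoundedLT.induction with
  | _ b IHb =>
  refine nadd_le_iff.2 ⟨fun a' ha' => ?_, fun b' hb' => ?_⟩
  · refine (IHa a' ha' b).trans_lt (mul_add_lt_mul_add (hW (mod_lt _ hW₀) (mod_lt _ hW₀)) ?_)
    rcases div_lt_div_or_mod_lt W ha' with h | ⟨h, h'⟩
    · exact .inl (nadd_lt_nadd_right h _)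
    · exact .inr ⟨by rw [h], nadd_lt_nadd_right h' _⟩
  · refine (IHb b' hb').trans_lt (mul_add_lt_mul_add (hW (mod_lt _ hW₀) (mod_lt _ hW₀)) ?_)
    rcases div_lt_div_or_mod_lt W hb' with h | ⟨h, h'⟩
    · exact .inl (nadd_lt_nadd_left h _)
    · exact .inr ⟨by rw [h], nadd_lt_nadd_left h' _⟩

theorem IsPrincipal.nadd_mul {W c : Ordinal.{u}} (hW : IsPrincipal nadd W)
    (hc : IsPrincipal nadd c) : IsPrincipal nadd (W * c) := by
  rcases eq_or_ne W 0 with rfl | hW₀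
  · rw [zero_mul]; exact isPrincipal_zero
  intro a b ha hb
  calc a ♯ b ≤ W * (a / W ♯ b / W) + (a % W ♯ b % W) :=
        nadd_le_mul_div_nadd_add_mod_nadd hW hW₀ a b
    _ < W * c + 0 := mul_add_lt_mul_add (hW (mod_lt a hW₀) (mod_lt b hW₀))
        (.inl (hc ((lt_mul_iff_div_lt hW₀).1 ha) ((lt_mul_iff_div_lt hW₀).1 hb)))
    _ = W * c := add_zero _

theorem isPrincipal_nadd_omega0_opow (δ : Ordinal.{u}) : IsPrincipal nadd (ω ^ δ) := by
  induction δ using WellFoundedLT.induction with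
  | _ δ IH =>
  rcases zero_or_succ_or_isSuccLimit δ with rfl | ⟨e, rfl⟩ | hδ
  · rw [opow_zero, isPrincipal_one_iff, ← nonpos_iff_eq_zero, nadd_le_iff]
    simp
  · rw [opow_succ]
    exact (IH e (Order.lt_succ e)).nadd_mul isPrincipal_nadd_omega0
  · intro a b ha hb
    obtain ⟨e₁, he₁, ha⟩ := (lt_opow_of_isSuccLimit omega0_ne_zero hδ).1 ha
    obtain ⟨e₂, he₂, hb⟩ := (lt_opow_of_isSuccLimit omega0_ne_zero hδ).1 hb
    have hmono : Monotone (ω ^ · : Ordinal.{u} → Ordinal.{u}) :=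
      fun _ _ => opow_le_opow_right omega0_pos
    exact (IH _ (max_lt he₁ he₂) (ha.trans_le (hmono (le_max_left _ _)))
      (hb.trans_le (hmono (le_max_right _ _)))).trans_le (hmono (max_lt he₁ he₂).le)

theorem IsPrincipal.nadd_of_add {o : Ordinal.{u}} (h : IsPrincipal (· + ·) o) :
    IsPrincipal nadd o := by
  obtain rfl | ⟨δ, rfl⟩ := isPrincipal_add_iff_zero_or_omega0_opow.1 h
  · exact isPrincipal_zero
  · exact isPrincipal_nadd_omega0_opow δ

theorem isPrincipal_add_lift {o : Ordinal.{u}} (h : IsPrincipal (· + ·) o) :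
    IsPrincipal (· + ·) (lift.{v} o) := by
  rw [isPrincipal_add_iff_add_self_lt] at h ⊢
  intro b hb
  obtain ⟨b, rfl⟩ := mem_range_lift_of_le hb.le
  rw [← lift_add, lift_lt]
  exact h b (lift_lt.1 hb)

section OrderType

variable {X : Type u} [LinearOrder X] [WellFoundedLT X]

theorem type_le_of_strictMono {c : Ordinal.{u}} {f : X → Ordinal.{u}} (hf : StrictMono f)
    (hc : ∀ x, f x < c) : typeLT X ≤ c := by
  let g : X ↪o c.ToType :=
    (OrderEmbedding.ofStrictMono (fun x => (⟨f x, hc x⟩ : Iio c)) fun _ _ h => hf h).trans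
      ToType.mk.toOrderEmbedding
  simpa using type_le_iff'.2 ⟨g.ltEmbedding⟩

theorem type_inter_Iio_lt {s : Set X} {x : X} (hx : x ∈ s) :
    typeLT ↥(s ∩ Iio x) < typeLT s := by
  let e : ↥(s ∩ Iio x) ≃o Iio (⟨x, hx⟩ : s) :=
    { toFun := fun y => ⟨⟨y, y.2.1⟩, y.2.2⟩
      invFun := fun y => ⟨y.1, y.1.2, y.2⟩
      left_inv := fun _ => rfl
      right_inv := fun _ => rfl
      map_rel_iff' := Iff.rfl }
  rw [e.ordinalType_congr, type_Iio_lt]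
  exact typein_lt_type _ _

theorem type_inter_Iio_lt_of_lt {s : Set X} {x y : X} (hx : x ∈ s) (hxy : x < y) :
    typeLT ↥(s ∩ Iio x) < typeLT ↥(s ∩ Iio y) := by
  have hs : s ∩ Iio y ∩ Iio x = s ∩ Iio x := by
    rw [inter_assoc, Iio_inter_Iio, min_eq_right hxy.le]
  rw [← hs]
  exact type_inter_Iio_lt ⟨hx, hxy⟩

theorem type_inter_Iio_mono (s : Set X) : Monotone fun x => typeLT ↥(s ∩ Iio x) :=
  fun _ _ h => type_mono (inter_subset_inter_right s (Iio_subset_Iio h))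

theorem type_union_le_nadd (A B : Set X) : typeLT ↥(A ∪ B) ≤ typeLT A ♯ typeLT B := by
  refine type_le_of_strictMono (f := fun x : ↥(A ∪ B) =>
    typeLT ↥(A ∩ Iio x.1) ♯ typeLT ↥(B ∩ Iio x.1)) (fun x y hxy => ?_) (fun x => ?_)
  · rcases x.2 with hx | hx
    · exact (nadd_lt_nadd_right (type_inter_Iio_lt_of_lt hx hxy) _).trans_le
        (nadd_le_nadd_left (type_inter_Iio_mono B hxy.le) _)
    · exact (nadd_le_nadd_right (type_inter_Iio_mono A hxy.le) _).trans_lt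
        (nadd_lt_nadd_left (type_inter_Iio_lt_of_lt hx hxy) _)
  · rcases x.2 with hx | hx
    · exact (nadd_lt_nadd_right (type_inter_Iio_lt hx) _).trans_le
        (nadd_le_nadd_left (type_mono inter_subset_left) _)
    · exact (nadd_le_nadd_right (type_mono inter_subset_left) _).trans_lt
        (nadd_lt_nadd_left (type_inter_Iio_lt hx) _)

theorem type_eq_or_type_diff_eq {S A : Set X} (hS : IsPrincipal (· + ·) (typeLT S))
    (hA : A ⊆ S) : typeLT A = typeLT S ∨ typeLT ↥(S \ A) = typeLT S := by
  by_contra! h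
  have hlt := hS.nadd_of_add ((type_mono hA).lt_of_ne h.1) ((type_mono sdiff_subset).lt_of_ne h.2)
  have := (type_union_le_nadd A (S \ A)).trans_lt hlt
  rw [union_sdiff_cancel hA] at this
  exact this.false

end OrderType

end Ordinal

theorem lift_otypeOf {s : Set Ordinal.{u}} {α : Ordinal.{u}} (hs : s ⊆ Iio α) :
    lift.{u + 1} (otypeOf s : Ordinal.{u}) = typeLT s := by
  obtain ⟨t, ht⟩ := mem_range_lift_of_le.{u, u + 1} ((type_mono hs).trans (type_lt_Iio α).le)
  suffices {o | Nonempty (s ≃o Iio o)} = {t} by rw [otypeOf, this, csInf_singleton, ht]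
  ext o
  rw [mem_ofPred_eq, mem_singleton_iff, ← lift_inj.{u + 1}, ht, ← type_lt_Iio, eq_comm, type_eq]
  exact ⟨fun ⟨e⟩ => ⟨e.toRelIsoLT⟩, fun ⟨e⟩ => ⟨.ofRelIsoLT e⟩⟩

theorem stmt4_general (α δ : Ordinal) (hα : α = omega0 ^ δ) :
    ∀ A : Set Ordinal, A ⊆ Set.Iio α →
      otypeOf A = α ∨ otypeOf (Set.Iio α \ A) = α := by
  intro A hA
  have hprin : IsPrincipal (· + ·) (typeLT (Iio α)) := by
    rw [type_lt_Iio, hα]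
    exact isPrincipal_add_lift (isPrincipal_add_omega0_opow δ)
  have h := type_eq_or_type_diff_eq hprin hA
  rwa [← lift_otypeOf hA, ← lift_otypeOf sdiff_subset, type_lt_Iio, lift_inj, lift_inj] at h

/-- For an indecomposable countable limit ordinal α (i.e. α = ω^δ, δ > 0) and any
A ⊆ α, either A or its complement α ∖ A has order type α. -/
theorem stmt4 (α δ : Ordinal) (hc : α.card ≤ Cardinal.aleph0) (hl : Order.IsSuccLimit α)
    (hδ : 0 < δ) (hα : α = omega0 ^ δ) :
    ∀ A : Set Ordinal, A ⊆ Set.Iio α →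
      otypeOf A = α ∨ otypeOf (Set.Iio α \ A) = α :=
  stmt4_general α δ hα
end

section
/- For a limit ordinal γ and k ≥ 1, every A ∈ 𝒫(γ + k) has the form C ∪ {γ, γ+1, …, γ+k−1} for some C ∈ 𝒫(γ); that is, every copy of γ + k inside γ + k contains all the points γ, γ+1, …, γ+k−1. -/
open Ordinal Set

/-- The set of subsets of `α` (i.e. of `Set.Iio α`) order-isomorphic to `α`. -/
noncomputable def Copies (α : Ordinal) : Set (Set Ordinal) :=
  {A | A ⊆ Set.Iio α ∧ otypeOf A = α}

universe u

/-! The enumeration `f : γ + k → A ⊆ γ + k` of a copy `A` is strictly increasing, so `β ≤ f β`.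
Working down from the top, `f (γ + k - 1) < γ + k` and `f (γ + i) < f (γ + i + 1) = γ + i + 1`
force `f (γ + i) = γ + i` for every `i < k`. In particular `f γ = γ`, so `f` maps `γ` onto
`A ∩ γ`. -/

theorem Ordinal.eq_of_orderIso_Iio {o₁ o₂ : Ordinal.{u}} (e : Iio o₁ ≃o Iio o₂) : o₁ = o₂ := by
  rw [← lift_inj.{u + 1}, ← type_lt_Iio, ← type_lt_Iio]
  exact e.toRelIsoLT.ordinalType_congr

theorem otypeOf_eq_of_orderIso {s : Set Ordinal.{u}} {o : Ordinal.{u}} (e : s ≃o Iio o) :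
    otypeOf s = o := by
  have hsingleton : {o' : Ordinal | Nonempty (s ≃o Iio o')} = {o} :=
    Set.eq_singleton_iff_unique_mem.2
      ⟨⟨e⟩, fun _ ⟨e'⟩ => Ordinal.eq_of_orderIso_Iio (e'.symm.trans e)⟩
  rw [otypeOf, hsingleton, csInf_singleton]

theorem nonempty_orderIso_of_mem_Copies {A : Set Ordinal.{u}} {α : Ordinal.{u}}
    (hA : A ∈ Copies α) : Nonempty (A ≃o Iio α) := by
  obtain ⟨hsub, hotype⟩ := hA
  rcases Set.eq_empty_or_nonempty {o : Ordinal | Nonempty (A ≃o Iio o)} with h | h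
  · -- the junk value `sInf ∅ = 0` forces `α = 0`, and then `A = ∅ = Iio 0`
    rw [otypeOf, h, Ordinal.sInf_empty] at hotype
    subst hotype
    refine ⟨OrderIso.setCongr _ _ (Set.eq_empty_of_subset_empty ?_ |>.trans ?_)⟩ <;> simp_all
  · exact hotype ▸ csInf_mem h

theorem StrictMono.apply_eq_self_of_add_natCast_eq {α : Ordinal} {f : Iio α → Iio α}
    (hf : StrictMono f) (n : ℕ) (β : Iio α) (h : (β : Ordinal) + (n + 1 : ℕ) = α) :
    f β = β := by
  have of_lt_add_one (β : Iio α) (hβ : (f β : Ordinal) < β + 1) : f β = β :=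
    le_antisymm (Subtype.coe_le_coe.1 (Order.lt_add_one_iff.1 hβ)) hf.le_apply
  induction n generalizing β with
  | zero => exact of_lt_add_one β (by simpa using (f β).2.trans_eq h.symm)
  | succ n ih =>
    have hsucc : (β : Ordinal) + 1 + (n + 1 : ℕ) = α := by
      refine Eq.trans ?_ h
      rw [add_assoc]
      exact congrArg ((β : Ordinal) + ·) (by norm_cast; omega)
    have hlt : (β : Ordinal) + 1 < α :=
      (lt_add_of_pos_right _ (by exact_mod_cast n.succ_pos)).trans_eq hsucc
    refine of_lt_add_one β ?_
    calc (f β : Ordinal)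
        < f ⟨_, hlt⟩ := hf (Order.lt_add_one_iff.2 le_rfl : (β : Ordinal) < β + 1)
      _ = β + 1 := congrArg Subtype.val (ih ⟨_, hlt⟩ hsucc)

theorem otypeOf_inter_Iio_orderIso_apply {α β : Ordinal.{u}} {A : Set Ordinal.{u}}
    (e : Iio α ≃o A) (hβ : β < α) : otypeOf (A ∩ Iio (e ⟨β, hβ⟩ : Ordinal)) = β := by
  let g : Iio β → ↥(A ∩ Iio (e ⟨β, hβ⟩ : Ordinal)) := fun x =>
    ⟨e ⟨x, x.2.trans hβ⟩, (e _).2, e.lt_iff_lt.2 x.2⟩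
  have hg : StrictMono g := fun _ _ hxy => e.lt_iff_lt.2 hxy
  have hg_surj : Function.Surjective g := by
    rintro ⟨a, haA, hab⟩
    have hlt : e.symm ⟨a, haA⟩ < ⟨β, hβ⟩ := e.symm_apply_lt.2 hab
    exact ⟨⟨_, hlt⟩, Subtype.ext <|
      show (e (e.symm ⟨a, haA⟩) : Ordinal) = a from congrArg Subtype.val (e.apply_symm_apply _)⟩
  exact otypeOf_eq_of_orderIso (hg.orderIsoOfSurjective g hg_surj).symm

theorem Ordinal.exists_natCast_eq_add_of_le_of_lt_add {γ x : Ordinal} {k : ℕ} (h₁ : γ ≤ x)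
    (h₂ : x < γ + k) : ∃ i < k, x = γ + i := by
  obtain ⟨d, rfl⟩ := exists_add_of_le h₁
  have hd : d < k := (add_lt_add_iff_left γ).1 h₂
  obtain ⟨i, rfl⟩ := eq_natCast_of_le_natCast hd.le
  exact ⟨i, by exact_mod_cast hd, rfl⟩

theorem exists_orderIso_apply_add_natCast_eq {γ : Ordinal.{u}} {k : ℕ} {A : Set Ordinal.{u}}
    (hA : A ∈ Copies (γ + k)) :
    ∃ e : Iio (γ + k) ≃o A, ∀ i (hi : i < k),
      (e ⟨γ + i, (add_lt_add_iff_left γ).2 (Nat.cast_lt.2 hi)⟩ : Ordinal) = γ + i := by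
  obtain ⟨e⟩ := nonempty_orderIso_of_mem_Copies hA
  have hf : StrictMono (inclusion hA.1 ∘ e.symm) := fun _ _ h => e.symm.strictMono h
  refine ⟨e.symm, fun i hi =>
    congrArg Subtype.val (hf.apply_eq_self_of_add_natCast_eq (k - 1 - i) _ ?_)⟩
  rw [add_assoc, ← Nat.cast_add, show i + (k - 1 - i + 1) = k by omega]

theorem add_natCast_mem_of_mem_Copies {γ : Ordinal.{u}} {k : ℕ} {A : Set Ordinal.{u}}
    (hA : A ∈ Copies (γ + k)) {i : ℕ} (hi : i < k) : γ + i ∈ A := by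
  obtain ⟨e, he⟩ := exists_orderIso_apply_add_natCast_eq hA
  exact he i hi ▸ (e _).2

theorem stmt8_general (γ : Ordinal) (k : ℕ) (hk : 1 ≤ k) :
    (∀ A ∈ Copies (γ + k), ∃ C ∈ Copies γ,
        A = C ∪ {x : Ordinal | γ ≤ x ∧ x < γ + k}) ∧
    (∀ A ∈ Copies (γ + k), ∀ i : ℕ, i < k → γ + i ∈ A) := by
  refine ⟨fun A hA => ⟨A ∩ Iio γ, ⟨inter_subset_right, ?_⟩, ?_⟩,
    fun A hA i hi => add_natCast_mem_of_mem_Copies hA hi⟩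
  · obtain ⟨e, he⟩ := exists_orderIso_apply_add_natCast_eq hA
    have hγ : γ < γ + k := lt_add_of_pos_right γ (by exact_mod_cast hk)
    have hfixγ : (e ⟨γ, hγ⟩ : Ordinal) = γ := by simpa using he 0 hk
    simpa only [hfixγ] using otypeOf_inter_Iio_orderIso_apply e hγ
  · ext x
    refine ⟨fun hx => ?_, ?_⟩
    · rcases lt_or_ge x γ with h | h
      exacts [Or.inl ⟨hx, h⟩, Or.inr ⟨h, hA.1 hx⟩]
    · rintro (hx | ⟨h₁, h₂⟩)
      · exact hx.1
      · obtain ⟨i, hi, rfl⟩ := exists_natCast_eq_add_of_le_of_lt_add h₁ h₂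
        exact add_natCast_mem_of_mem_Copies hA hi

/-- For a limit ordinal γ and k ≥ 1, every A ∈ 𝒫(γ+k) has the form
C ∪ {γ, …, γ+k−1} with C ∈ 𝒫(γ); in particular every copy of γ+k inside γ+k
contains all the points γ, γ+1, …, γ+k−1. -/
theorem stmt8 (γ : Ordinal) (hl : Order.IsSuccLimit γ) (k : ℕ) (hk : 1 ≤ k) :
    (∀ A ∈ Copies (γ + k), ∃ C ∈ Copies γ,
        A = C ∪ {x : Ordinal | γ ≤ x ∧ x < γ + k}) ∧
    (∀ A ∈ Copies (γ + k), ∀ i : ℕ, i < k → γ + i ∈ A) :=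
  stmt8_general γ k hk
end

section
/- Let β ≥ 1 and identify ω^{β+1} with L = ω × ω^β ordered lexicographically, with columns L_i = {i} × ω^β. Then a subset A ⊆ L contains a copy of L if and only if for every j ∈ ω there exists i ≥ j such that ω^β embeds into A ∩ L_i. Equivalently, I_L = Fin × I_{ω^β}, the Fubini product of the Fréchet ideal with I_{ω^β}. -/
/-! An embedding `f : ℕ ×ₗ X ↪o A` pushes column `n` up to the highest row `r n` it reaches,
and it reaches that row on a final segment of the column. When every final segment of `X` contains a
copy of `X` (as for `X = ω ^ β`, which is additively principal), row `r n` of `A` therefore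
contains a copy of `X`. Two consecutive columns cannot share their top row, since that would embed
`X` into a proper initial segment of itself; so `r` is strictly increasing and infinitely many rows
of `A` contain `X`. Conversely, copies of `X` in infinitely many rows, enumerated increasingly,
stack up to a copy of `ℕ ×ₗ X`. -/

open Ordinal Set Filter

section LexColumns

variable {X : Type*} [LinearOrder X]

def lexColumn (A : Set (ℕ ×ₗ X)) (i : ℕ) : Set X := {y | toLex (i, y) ∈ A}

theorem Nat.exists_forall_le_of_bddAbove_range {ι : Type*} [Nonempty ι] {g : ι → ℕ}
    (h : BddAbove (range g)) : ∃ i, ∀ j, g j ≤ g i := by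
  obtain ⟨i, hi⟩ := Nat.sSup_mem (range_nonempty g) h
  exact ⟨i, fun j => hi ▸ le_csSup h (mem_range_self j)⟩

theorem StrictMono.lex_snd_of_fst_eq {α Y : Type*} [PartialOrder α] [Preorder Y]
    {G : X → α ×ₗ Y} (hG : StrictMono G) {m : α} (hm : ∀ y, (ofLex (G y)).1 = m) :
    StrictMono fun y => (ofLex (G y)).2 :=
  fun _ _ hyz => (Prod.Lex.lt_iff'.1 (hG hyz)).2 ((hm _).trans (hm _).symm)

theorem exists_strictMono_fst_eq [Nonempty X] (hX : ∀ x : X, Nonempty (X ↪o Ici x))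
    {F : ℕ ×ₗ X → ℕ ×ₗ X} (hF : StrictMono F) (n : ℕ) :
    ∃ m : ℕ, ∃ s : X → X, StrictMono s ∧ ∀ y, (ofLex (F (toLex (n, s y)))).1 = m := by
  set row : X → ℕ := fun y => (ofLex (F (toLex (n, y)))).1
  have hrow : Monotone row :=
    Prod.Lex.monotone_fst_ofLex.comp (hF.monotone.comp (Prod.Lex.toLex_mono.comp
      (monotone_const.prodMk monotone_id)))
  obtain ⟨y₀⟩ := ‹Nonempty X›
  have hbdd : BddAbove (range row) := by
    refine ⟨(ofLex (F (toLex (n + 1, y₀)))).1, forall_mem_range.2 fun y => ?_⟩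
    exact Prod.Lex.monotone_fst_ofLex
      (hF (Prod.Lex.toLex_lt_toLex.2 (Or.inl n.lt_succ_self))).le
  obtain ⟨top, htop⟩ := Nat.exists_forall_le_of_bddAbove_range hbdd
  obtain ⟨s⟩ := hX top
  exact ⟨row top, fun y => s y, fun _ _ h => s.strictMono h,
    fun y => le_antisymm (htop _) (hrow (s y).2)⟩

theorem exists_strictMono_lexColumn_of_orderEmbedding [WellFoundedLT X] [Nonempty X]
    (hX : ∀ x : X, Nonempty (X ↪o Ici x)) {A : Set (ℕ ×ₗ X)} (f : ℕ ×ₗ X ↪o A) :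
    ∃ r : ℕ → ℕ, StrictMono r ∧ ∀ n, Nonempty (X ↪o lexColumn A (r n)) := by
  set F : ℕ ×ₗ X → ℕ ×ₗ X := fun p => f p
  have hF : StrictMono F := fun _ _ h => f.strictMono h
  choose r s hs hr using exists_strictMono_fst_eq hX hF
  set e : ℕ → X → X := fun n y => (ofLex (F (toLex (n, s n y)))).2
  have he : ∀ n, StrictMono (e n) := fun n =>
    StrictMono.lex_snd_of_fst_eq (fun _ _ h => hF (Prod.Lex.toLex_strictMono
      (Prod.mk_lt_mk_iff_right.2 (hs n h)))) (hr n)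
  have hFe : ∀ n y, F (toLex (n, s n y)) = toLex (r n, e n y) := fun n y => by
    rw [← hr n y]; rfl
  have hr_mono : StrictMono r := by
    refine strictMono_nat_of_lt_succ fun n => ?_
    set y := e (n + 1) (Classical.arbitrary X)
    -- if columns `n` and `n + 1` shared a row, `e n` would map `y` below itself
    have hlt : toLex (r n, e n y) < toLex (r (n + 1), e (n + 1) (Classical.arbitrary X)) := by
      rw [← hFe, ← hFe]
      exact hF (Prod.Lex.toLex_lt_toLex.2 (Or.inl n.lt_succ_self))
    obtain ⟨hle, hsnd⟩ := Prod.Lex.toLex_lt_toLex'.1 hlt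
    exact hle.lt_of_ne fun heq => (hsnd heq).not_ge ((he n).id_le y)
  refine ⟨r, hr_mono, fun n => ⟨OrderEmbedding.ofStrictMono
    (fun y => ⟨e n y, show toLex (r n, e n y) ∈ A from hFe n y ▸ (f _).2⟩)
    fun _ _ h => he n h⟩⟩

theorem nonempty_orderEmbedding_of_strictMono {A : Set (ℕ ×ₗ X)} {r : ℕ → ℕ}
    (hr : StrictMono r)
    (e : ∀ n, X ↪o lexColumn A (r n)) : Nonempty (ℕ ×ₗ X ↪o A) := by
  refine ⟨OrderEmbedding.ofStrictMono
    (fun p => ⟨toLex (r (ofLex p).1, e (ofLex p).1 (ofLex p).2), (e _ _).2⟩) ?_⟩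
  rintro ⟨a, x⟩ ⟨b, y⟩ h
  obtain ⟨hab, hxy⟩ := Prod.Lex.toLex_lt_toLex'.1 h
  refine Subtype.mk_lt_mk.2 (Prod.Lex.toLex_lt_toLex'.2 ⟨hr.monotone hab, fun heq => ?_⟩)
  obtain rfl := hr.injective heq
  exact (e a).strictMono (hxy rfl)

theorem nonempty_orderEmbedding_iff_infinite_lexColumn [WellFoundedLT X] [Nonempty X]
    (hX : ∀ x : X, Nonempty (X ↪o Ici x)) (A : Set (ℕ ×ₗ X)) :
    Nonempty (ℕ ×ₗ X ↪o A) ↔ {i | Nonempty (X ↪o lexColumn A i)}.Infinite := by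
  constructor
  · rintro ⟨f⟩
    obtain ⟨r, hr, hA⟩ := exists_strictMono_lexColumn_of_orderEmbedding hX f
    exact infinite_of_injective_forall_mem hr.injective hA
  · intro hA
    obtain ⟨r, hr, hA⟩ :=
      extraction_of_frequently_atTop (Nat.frequently_atTop_iff_infinite.2 hA)
    exact nonempty_orderEmbedding_of_strictMono hr fun n => (hA n).some

end LexColumns

theorem Ordinal.IsPrincipal.nonempty_orderEmbedding_Ici {o : Ordinal} (ho : IsPrincipal (· + ·) o)
    (x : Iio o) : Nonempty (Iio o ↪o Ici x) :=
  ⟨OrderEmbedding.ofStrictMono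
    (fun y => ⟨⟨x + y, ho x.2 y.2⟩, (le_self_add : (x : Ordinal) ≤ x + y)⟩)
    fun _ _ h => Subtype.mk_lt_mk.2 ((add_lt_add_iff_left (x : Ordinal)).2 h)⟩

theorem stmt12_general (β : Ordinal) :
    ∀ A : Set (ℕ ×ₗ (Set.Iio (omega0 ^ β))),
      (Nonempty ((ℕ ×ₗ (Set.Iio (omega0 ^ β))) ↪o A) ↔
        ∀ j : ℕ, ∃ i ≥ j, Nonempty ((Set.Iio (omega0 ^ β)) ↪o
          {y : Set.Iio (omega0 ^ β) | toLex (i, y) ∈ A})) ∧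
      (¬ Nonempty ((ℕ ×ₗ (Set.Iio (omega0 ^ β))) ↪o A) ↔
        {i : ℕ | Nonempty ((Set.Iio (omega0 ^ β)) ↪o
          {y : Set.Iio (omega0 ^ β) | toLex (i, y) ∈ A})}.Finite) := by
  intro A
  have : Nonempty (Iio (ω ^ β)) := ⟨⟨0, opow_pos β omega0_pos⟩⟩
  have key := nonempty_orderEmbedding_iff_infinite_lexColumn
    (isPrincipal_add_omega0_opow β).nonempty_orderEmbedding_Ici A
  refine ⟨key.trans ?_, by rw [key, not_infinite]; rfl⟩
  rw [← Nat.frequently_atTop_iff_infinite, frequently_atTop]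
  rfl

/-- Let β ≥ 1 and identify ω^{β+1} with L = ω × ω^β ordered lexicographically, with
columns L_i = {i} × ω^β. Then A ⊆ L contains a copy of L iff for every j there is
i ≥ j with ω^β embedding into A ∩ L_i; equivalently, I_L is the Fubini product
Fin × I_{ω^β}. -/
theorem stmt12 (β : Ordinal) (hβ : 1 ≤ β) :
    ∀ A : Set (ℕ ×ₗ (Set.Iio (omega0 ^ β))),
      (Nonempty ((ℕ ×ₗ (Set.Iio (omega0 ^ β))) ↪o A) ↔
        ∀ j : ℕ, ∃ i ≥ j, Nonempty ((Set.Iio (omega0 ^ β)) ↪o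
          {y : Set.Iio (omega0 ^ β) | toLex (i, y) ∈ A})) ∧
      (¬ Nonempty ((ℕ ×ₗ (Set.Iio (omega0 ^ β))) ↪o A) ↔
        {i : ℕ | Nonempty ((Set.Iio (omega0 ^ β)) ↪o
          {y : Set.Iio (omega0 ^ β) | toLex (i, y) ∈ A})}.Finite) :=
  stmt12_general β
end

section
/- For every n ≥ 1, the ideal I_{ω^n} of subsets of ω^n not containing a copy of ω^n is isomorphic to the n-fold Fubini power Fin^n of the Fréchet ideal. -/
open Ordinal Set

/-- The Fubini product of the Fréchet ideal `Fin` on ω with an ideal `J` on `Y`. -/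
def fub {Y : Type*} (J : Set (Set Y)) : Set (Set (ℕ × Y)) :=
  {A | {i : ℕ | {y : Y | (i, y) ∈ A} ∉ J}.Finite}

/-- The underlying set of the n-fold Fubini power: `T 0 = ω`, `T (n+1) = ω × T n`
(so `T (n-1)` carries the paper's `Fin^n`). -/
def T : ℕ → Type
  | 0 => ℕ
  | n + 1 => ℕ × T n

/-- The iterated Fubini powers of the Fréchet ideal: `finPow 0 = Fin`,
`finPow (n+1) = Fin × finPow n` (the paper's `Fin^{n+1}`). -/
def finPow : (n : ℕ) → Set (Set (T n))
  | 0 => {A : Set ℕ | A.Finite}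
  | n + 1 => fub (finPow n)

/-- The ideal `I_α` of subsets of `α` into which `α` does not embed. -/
def ordIdeal (α : Ordinal) : Set (Set (Set.Iio α)) :=
  {A | ¬ Nonempty ((Set.Iio α) ↪o A)}

/-!
Order `T n` lexicographically. This well-order has type `ω ^ (n + 1)`, and a subset of a
well-order contains a copy of the whole order iff its order type is not smaller, so the theorem
says that `B ∈ finPow n` iff `B` has order type `< ω ^ (n + 1)`. This goes by induction on `n`:
for `B ⊆ ℕ ×ₗ Y` with `type Y = β` additively principal, `type B < β * ω` iff only finitely many
sections `B_k` have type `β`. If all sections beyond `N` are smaller, every initial segment of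
that part of `B` lies in finitely many of them and has type `< β`, so `type B ≤ β * N + β`;
conversely, infinitely many full sections carry an embedding of `ℕ ×ₗ Y`, of type `β * ω`.
-/

universe u v

section Subrel

variable {α : Type*} {r : α → α → Prop} [IsWellOrder α r]

theorem type_subrel_mono {s t : Set α} (h : s ⊆ t) :
    type (Subrel r (· ∈ s)) ≤ type (Subrel r (· ∈ t)) :=
  type_le_iff'.2 ⟨Subrel.inclusionEmbedding r h⟩

theorem type_subrel_le (s : Set α) : type (Subrel r (· ∈ s)) ≤ type r :=
  type_le_iff'.2 ⟨Subrel.relEmbedding r _⟩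

theorem type_subrel_le_inter_add_diff {C L : Set α} (hL : ∀ ⦃x y⦄, r x y → y ∈ L → x ∈ L) :
    type (Subrel r (· ∈ C)) ≤ type (Subrel r (· ∈ C ∩ L)) + type (Subrel r (· ∈ C \ L)) := by
  classical
  rw [← type_sum_lex]
  refine type_le_iff'.2 ⟨RelEmbedding.ofMonotone (fun x => if h : x.1 ∈ L then
    Sum.inl ⟨x.1, x.2, h⟩ else Sum.inr ⟨x.1, x.2, h⟩) fun a b hab => ?_⟩
  by_cases ha : a.1 ∈ L <;> by_cases hb : b.1 ∈ L <;> simp only [ha, hb, dite_true, dite_false]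
  · exact Sum.Lex.inl hab
  · exact Sum.Lex.sep _ _
  · exact absurd (hL hab hb) ha
  · exact Sum.Lex.inr hab

theorem type_subrel_le_of_forall_lt {C : Set α} {β : Ordinal}
    (h : ∀ p ∈ C, type (Subrel r (· ∈ {q ∈ C | r q p})) < β) :
    type (Subrel r (· ∈ C)) ≤ β := by
  by_contra! hβ
  obtain ⟨p, hp⟩ := typein_surj (Subrel r (· ∈ C)) hβ
  have hseg : typein (Subrel r (· ∈ C)) p = type (Subrel r (· ∈ {q ∈ C | r q p})) :=
    type_eq.2 ⟨⟨⟨fun x => ⟨x.1.1, x.1.2, x.2⟩, fun y => ⟨⟨y.1, y.2.1⟩, y.2.2⟩,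
      fun _ => rfl, fun _ => rfl⟩, Iff.rfl⟩⟩
  exact (h p p.2).ne (hseg ▸ hp)

theorem type_subrel_lt_omega0_iff {B : Set α} : type (Subrel r (· ∈ B)) < ω ↔ B.Finite := by
  rw [← card_lt_aleph0, card_type, Cardinal.lt_aleph0_iff_set_finite]

end Subrel

namespace RelIso

variable {α β : Type*} {r : α → α → Prop} {s : β → β → Prop}

def subrelImage (F : r ≃r s) (A : Set α) : Subrel r (· ∈ A) ≃r Subrel s (· ∈ F '' A) where
  toEquiv := F.toEquiv.image A
  map_rel_iff' := F.map_rel_iff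

theorem nonempty_relEmbedding_subrel_image_iff (F : r ≃r s) (A : Set α) :
    Nonempty (r ↪r Subrel r (· ∈ A)) ↔ Nonempty (s ↪r Subrel s (· ∈ F '' A)) :=
  ⟨fun ⟨f⟩ => ⟨F.symm.toRelEmbedding.trans (f.trans (F.subrelImage A).toRelEmbedding)⟩,
    fun ⟨f⟩ => ⟨F.toRelEmbedding.trans (f.trans (F.subrelImage A).symm.toRelEmbedding)⟩⟩

end RelIso

theorem Prod.Lex.fst_le {α β : Type*} [Preorder α] {s : β → β → Prop} {x y : α × β}
    (h : Prod.Lex (· < ·) s x y) : x.1 ≤ y.1 := by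
  cases h with
  | left _ _ h => exact h.le
  | right => exact le_rfl

section Lex

variable {Y : Type} {s : Y → Y → Prop}

theorem lex_mem_fst_lt_of_lex (k : ℕ) ⦃x y : ℕ × Y⦄
    (h : Prod.Lex ((· < ·) : ℕ → ℕ → Prop) s x y) (hy : y ∈ {p : ℕ × Y | p.1 < k}) :
    x ∈ {p : ℕ × Y | p.1 < k} :=
  h.fst_le.trans_lt hy

variable [IsWellOrder Y s]

theorem type_subrel_lex_fst_eq_le (B : Set (ℕ × Y)) (k : ℕ) :
    type (Subrel (Prod.Lex ((· < ·) : ℕ → ℕ → Prop) s) (· ∈ {p ∈ B | p.1 = k})) ≤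
      type (Subrel s (· ∈ {y | (k, y) ∈ B})) := by
  refine type_le_iff'.2 ⟨RelEmbedding.ofMonotone
    (fun x => ⟨x.1.2, by obtain ⟨⟨i, y⟩, hB, rfl⟩ := x; exact hB⟩) ?_⟩
  rintro ⟨⟨i, y⟩, -, rfl⟩ ⟨⟨j, z⟩, -, hj⟩ (⟨-, -, h⟩ | ⟨-, h⟩)
  · omega
  · exact h

theorem type_subrel_lex_fst_lt_zero (B : Set (ℕ × Y)) :
    type (Subrel (Prod.Lex ((· < ·) : ℕ → ℕ → Prop) s) (· ∈ {p ∈ B | p.1 < 0})) = 0 :=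
  type_eq_zero_iff_isEmpty.2 ⟨fun x => Nat.not_lt_zero _ x.2.2⟩

theorem type_subrel_lex_fst_lt_succ_le (B : Set (ℕ × Y)) (k : ℕ) :
    type (Subrel (Prod.Lex ((· < ·) : ℕ → ℕ → Prop) s) (· ∈ {p ∈ B | p.1 < k + 1})) ≤
      type (Subrel (Prod.Lex ((· < ·) : ℕ → ℕ → Prop) s) (· ∈ {p ∈ B | p.1 < k})) +
        type (Subrel s (· ∈ {y | (k, y) ∈ B})) := by
  refine (type_subrel_le_inter_add_diff (lex_mem_fst_lt_of_lex k)).trans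
    (add_le_add (type_subrel_mono ?_) ((type_subrel_mono ?_).trans (type_subrel_lex_fst_eq_le B k)))
  · exact fun p hp => ⟨hp.1.1, hp.2⟩
  · exact fun p ⟨⟨hB, hk⟩, hk'⟩ => ⟨hB, by simp only [mem_ofPred_eq, not_lt] at hk hk'; omega⟩

theorem type_subrel_lex_fst_lt_le_mul (B : Set (ℕ × Y)) {γ : Ordinal} (k : ℕ)
    (hγ : ∀ i < k, type (Subrel s (· ∈ {y | (i, y) ∈ B})) ≤ γ) :
    type (Subrel (Prod.Lex ((· < ·) : ℕ → ℕ → Prop) s) (· ∈ {p ∈ B | p.1 < k})) ≤ γ * k := by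
  induction k with
  | zero => exact (type_subrel_lex_fst_lt_zero B).trans_le (by simp)
  | succ k ih =>
    calc _ ≤ _ := type_subrel_lex_fst_lt_succ_le B k
      _ ≤ γ * k + γ := add_le_add (ih fun i hi => hγ i (by omega)) (hγ k k.lt_succ_self)
      _ = γ * (k + 1 : ℕ) := by rw [Nat.cast_succ, mul_add_one]

theorem type_subrel_lex_fst_lt_lt {B : Set (ℕ × Y)} {β : Ordinal} (hβ : IsPrincipal (· + ·) β)
    (hB : ∀ k, type (Subrel s (· ∈ {y | (k, y) ∈ B})) < β) (k : ℕ) :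
    type (Subrel (Prod.Lex ((· < ·) : ℕ → ℕ → Prop) s) (· ∈ {p ∈ B | p.1 < k})) < β := by
  induction k with
  | zero => exact (type_subrel_lex_fst_lt_zero B).trans_lt (hB 0).pos
  | succ k ih => exact (type_subrel_lex_fst_lt_succ_le B k).trans_lt (hβ ih (hB k))

theorem type_subrel_lex_le_of_isPrincipal {B : Set (ℕ × Y)} {β : Ordinal}
    (hβ : IsPrincipal (· + ·) β) (hB : ∀ k, type (Subrel s (· ∈ {y | (k, y) ∈ B})) < β) :
    type (Subrel (Prod.Lex ((· < ·) : ℕ → ℕ → Prop) s) (· ∈ B)) ≤ β :=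
  type_subrel_le_of_forall_lt fun p _ =>
    (type_subrel_mono (t := {q ∈ B | q.1 < p.1 + 1})
      fun _ hq => ⟨hq.1, Nat.lt_succ_of_le hq.2.fst_le⟩).trans_lt
      (type_subrel_lex_fst_lt_lt hβ hB (p.1 + 1))


theorem type_subrel_lex_lt_mul_omega0 {B : Set (ℕ × Y)} (hs : IsPrincipal (· + ·) (type s))
    (hB : {k | ¬ type (Subrel s (· ∈ {y | (k, y) ∈ B})) < type s}.Finite) :
    type (Subrel (Prod.Lex ((· < ·) : ℕ → ℕ → Prop) s) (· ∈ B)) < type s * ω := by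
  obtain ⟨M, hM⟩ := hB.bddAbove
  have hsmall : ∀ k, M < k → type (Subrel s (· ∈ {y | (k, y) ∈ B})) < type s :=
    fun k hk => not_not.1 fun h => hk.not_ge (hM h)
  have hpos : 0 < type s := (hsmall (M + 1) M.lt_succ_self).pos
  have hhigh : ∀ k, type (Subrel s (· ∈ {y | (k, y) ∈ B \ {p | p.1 < M + 1}})) < type s := by
    intro k
    by_cases hk : M < k
    · exact (type_subrel_mono fun y hy => hy.1).trans_lt (hsmall k hk)
    · rw [type_eq_zero_iff_isEmpty.2 ⟨fun y => y.2.2 (Nat.lt_succ_of_le (not_lt.1 hk))⟩]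
      exact hpos
  calc _ ≤ _ := type_subrel_le_inter_add_diff (lex_mem_fst_lt_of_lex (M + 1))
    _ ≤ type s * (M + 1 : ℕ) + type s :=
      add_le_add (type_subrel_lex_fst_lt_le_mul B (M + 1) fun _ _ => type_subrel_le _)
        (type_subrel_lex_le_of_isPrincipal hs hhigh)
    _ = type s * (M + 2 : ℕ) := by rw [← mul_add_one]; norm_cast
    _ < type s * ω := (mul_lt_mul_iff_right₀ hpos).2 (natCast_lt_omega0 _)

theorem type_mul_omega0_le_type_subrel_lex {B : Set (ℕ × Y)}
    (hB : {k | type s ≤ type (Subrel s (· ∈ {y | (k, y) ∈ B}))}.Infinite) :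
    type s * ω ≤ type (Subrel (Prod.Lex ((· < ·) : ℕ → ℕ → Prop) s) (· ∈ B)) := by
  set S := {k | type s ≤ type (Subrel s (· ∈ {y | (k, y) ∈ B}))}
  have f : ∀ i, s ↪r Subrel s (· ∈ {y | (Nat.nth (· ∈ S) i, y) ∈ B}) :=
    fun i => (type_le_iff'.1 (Nat.nth_mem_of_infinite hB i)).some
  rw [← type_nat_lt, ← type_prod_lex]
  refine type_le_iff'.2 ⟨RelEmbedding.ofMonotone (fun p => ⟨_, (f p.1 p.2).2⟩) ?_⟩
  rintro ⟨i, y⟩ ⟨j, z⟩ (⟨-, -, h⟩ | ⟨i, h⟩)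
  · exact Prod.Lex.left _ _ (Nat.nth_strictMono hB h)
  · exact Prod.Lex.right _ ((f i).map_rel_iff.2 h)

theorem type_subrel_lex_lt_mul_omega0_iff {B : Set (ℕ × Y)} (hs : IsPrincipal (· + ·) (type s)) :
    type (Subrel (Prod.Lex ((· < ·) : ℕ → ℕ → Prop) s) (· ∈ B)) < type s * ω ↔
      {k | ¬ type (Subrel s (· ∈ {y | (k, y) ∈ B})) < type s}.Finite := by
  refine ⟨fun h => ?_, type_subrel_lex_lt_mul_omega0 hs⟩
  by_contra hinf
  simp only [not_lt] at hinf
  exact (type_mul_omega0_le_type_subrel_lex hinf).not_gt h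

end Lex

theorem Ordinal.lift_omega0_opow_natCast (k : ℕ) :
    lift.{v} (ω ^ (k : Ordinal.{u})) = ω ^ (k : Ordinal) := by
  simp only [opow_natCast]
  induction k with
  | zero => simp
  | succ k ih => rw [pow_succ, pow_succ, lift_mul, ih, lift_omega0]

theorem nonempty_orderEmbedding_iff_relEmbedding_subrel {α : Type*} [PartialOrder α]
    (A : Set α) :
    Nonempty (α ↪o A) ↔ Nonempty (((· < ·) : α → α → Prop) ↪r Subrel (· < ·) (· ∈ A)) :=
  ⟨fun ⟨f⟩ => ⟨f.ltEmbedding⟩, fun ⟨f⟩ => ⟨RelEmbedding.orderEmbeddingOfLTEmbedding f⟩⟩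

def T.lex : (n : ℕ) → T n → T n → Prop
  | 0 => ((· < ·) : ℕ → ℕ → Prop)
  | n + 1 => Prod.Lex ((· < ·) : ℕ → ℕ → Prop) (T.lex n)

instance T.isWellOrder_lex : ∀ n, IsWellOrder (T n) (T.lex n)
  | 0 => inferInstanceAs (IsWellOrder ℕ (· < ·))
  | n + 1 =>
    letI := T.isWellOrder_lex n
    inferInstanceAs (IsWellOrder (ℕ × T n) (Prod.Lex _ _))

theorem T.type_lex_zero : type (T.lex 0) = ω :=
  type_nat_lt

theorem T.type_lex_succ (n : ℕ) : type (T.lex (n + 1)) = type (T.lex n) * ω :=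
  (type_prod_lex (T.lex n) ((· < ·) : ℕ → ℕ → Prop)).trans (by rw [type_nat_lt])

theorem T.type_lex : ∀ n, type (T.lex n) = ω ^ ((n + 1 : ℕ) : Ordinal)
  | 0 => by rw [T.type_lex_zero, zero_add, Nat.cast_one, opow_one]
  | n + 1 => by
    rw [T.type_lex_succ, T.type_lex n, ← opow_succ, Order.succ_eq_add_one, ← Nat.cast_succ]

theorem mem_finPow_iff_type_lt : ∀ (n : ℕ) (B : Set (T n)),
    B ∈ finPow n ↔ type (Subrel (T.lex n) (· ∈ B)) < type (T.lex n)
  | 0, B => by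
    rw [T.type_lex_zero, type_subrel_lt_omega0_iff]
    rfl
  | n + 1, B => by
    have hprin : IsPrincipal (· + ·) (type (T.lex n)) :=
      T.type_lex n ▸ isPrincipal_add_omega0_opow _
    rw [T.type_lex_succ]
    refine Iff.trans ?_ (type_subrel_lex_lt_mul_omega0_iff hprin).symm
    simp only [← mem_finPow_iff_type_lt n]
    rfl

theorem nonempty_relIso_Iio_omega0_opow (m : ℕ) :
    Nonempty (((· < ·) : Iio (ω ^ ((m + 1 : ℕ) : Ordinal.{u})) → _ → Prop) ≃r T.lex m) :=
  lift_type_eq.{u + 1, 0, 0}.1 <| by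
    rw [lift_uzero, type_lt_Iio, T.type_lex, lift_omega0_opow_natCast, lift_omega0_opow_natCast]

/-- For every n ≥ 1, the ideal I_{ω^n} of subsets of ω^n not containing a copy of
ω^n is isomorphic to the n-fold Fubini power Fin^n of the Fréchet ideal. -/
theorem stmt14 (n : ℕ) (hn : 1 ≤ n) :
    ∃ e : (Set.Iio (omega0 ^ (n : Ordinal))) ≃ T (n - 1),
      ∀ A : Set (Set.Iio (omega0 ^ (n : Ordinal))),
        A ∈ ordIdeal (omega0 ^ (n : Ordinal)) ↔ e '' A ∈ finPow (n - 1) := by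
  obtain ⟨m, rfl⟩ := Nat.exists_eq_add_of_le' hn
  obtain ⟨F⟩ := nonempty_relIso_Iio_omega0_opow m
  refine ⟨F.toEquiv, fun A => ?_⟩
  calc A ∈ ordIdeal _ ↔ ¬ Nonempty (((· < ·) : Iio _ → _ → Prop) ↪r Subrel (· < ·) (· ∈ A)) :=
        (nonempty_orderEmbedding_iff_relEmbedding_subrel A).not
    _ ↔ ¬ Nonempty (T.lex m ↪r Subrel (T.lex m) (· ∈ F '' A)) :=
        (F.nonempty_relEmbedding_subrel_image_iff A).not
    _ ↔ F '' A ∈ finPow m := by rw [← type_le_iff', not_le, mem_finPow_iff_type_lt]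
end
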